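/- Let R, R̄ > 0 and let P(y^n) be a probability distribution on {R, −R̄}^n with P(y^n) > 0 for all sequences, and let f_i(y^{i−1}) be betting fractions with 1 + f_i(y^{i−1})·y_i > 0. Then the average capital growth rate satisfies ⟨(1/n) Σ_{i=1}^n ln(1 + f_i(y^{i−1})·y_i)⟩_{y^n ∼ P} ≤ (1/n)·D_KL(P(y^n)‖Q(y^n)), where Q(y^n) = ∏_i Q(y_i) and D_KL(P‖Q) = Σ_{y^n} P(y^n) ln(P(y^n)/Q(y^n)). -/

import Mathlib

/-- Outcome value map for binary gambling: `true ↦ R` (win), `false ↦ -R̄` (loss). -/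
noncomputable def val (R Rbar : ℝ) (b : Bool) : ℝ := if b then R else -Rbar

/-- The reference distribution `Q` on the two outcomes:
`Q(R) = R̄/(R+R̄)`, `Q(-R̄) = R/(R+R̄)`. -/
noncomputable def Qb (R Rbar : ℝ) (b : Bool) : ℝ :=
  if b then Rbar / (R + Rbar) else R / (R + Rbar)

/-!
Write `W(y) = ∏ᵢ (1 + fᵢ(y^{i-1}) yᵢ)` for the final capital, so that the growth rate is
`(1/n) ln W`. Since `Q` gives fair odds (`Q(R)·R = Q(-R̄)·R̄`) and each fraction only sees the
past, the expected capital under `Q(y^n)` is exactly `1`: summing out the last outcome leaves the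
same quantity for `n - 1` games. Hence `Q·W` is a probability weight, and
`ln x ≤ x - 1` applied to `Q·W/P` gives `⟨ln W⟩_P ≤ D_KL(P‖Q)`.
-/

open Real

section Causal

variable {α : Type*} [Fintype α] [Nonempty α]

theorem sum_prod_eq_one_of_causal : ∀ {n : ℕ} (h : Fin n → (Fin n → α) → ℝ),
    (∀ i (y y' : Fin n → α), (∀ j ≤ i, y j = y' j) → h i y = h i y') →
    (∀ i y, ∑ b, h i (Function.update y i b) = 1) →
    ∑ y, ∏ i, h i y = 1
  | 0, _, _, _ => by simp
  | n + 1, h, hdep, hsum => by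
    obtain ⟨a⟩ := ‹Nonempty α›
    set h' : Fin n → (Fin n → α) → ℝ := fun i y => h i.castSucc (Fin.snoc y a)
    have hinit : ∀ y b, ∏ i : Fin n, h i.castSucc (Fin.snoc y b) = ∏ i, h' i y :=
      fun y b => Finset.prod_congr rfl fun i _ => hdep _ _ _ fun j hj => by
        induction j using Fin.lastCases with
        | last => exact absurd hj (not_le.mpr (Fin.castSucc_lt_last i))
        | cast k => simp only [Fin.snoc_castSucc]
    have hlast : ∀ y, ∑ b, h (Fin.last n) (Fin.snoc y b) = 1 := fun y => by
      simpa only [Fin.update_snoc_last] using hsum (Fin.last n) (Fin.snoc y a)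
    have ih : ∑ y, ∏ i, h' i y = 1 := by
      refine sum_prod_eq_one_of_causal h' (fun i y y' hy => hdep _ _ _ fun j hj => ?_)
        fun i y => by simpa only [h', Fin.snoc_update] using hsum i.castSucc (Fin.snoc y a)
      induction j using Fin.lastCases with
      | last => exact absurd hj (not_le.mpr (Fin.castSucc_lt_last i))
      | cast k => simpa only [Fin.snoc_castSucc] using hy k (Fin.castSucc_le_castSucc_iff.mp hj)
    calc ∑ y, ∏ i, h i y = ∑ y : Fin n → α, ∑ b, ∏ i, h i (Fin.snoc y b) := by
          rw [← (Fin.snocEquiv fun _ => α).sum_comp, Fintype.sum_prod_type_right]; rfl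
      _ = ∑ y, (∏ i, h' i y) * ∑ b, h (Fin.last n) (Fin.snoc y b) := by
          simp only [Fin.prod_univ_castSucc, hinit, Finset.mul_sum]
      _ = 1 := by simp only [hlast, mul_one, ih]

end Causal

theorem sum_mul_log_le_sum_mul_log_div {ι : Type*} [Fintype ι] (P Q W : ι → ℝ)
    (hP : ∀ y, 0 < P y) (hQ : ∀ y, 0 < Q y) (hW : ∀ y, 0 < W y) (hPsum : ∑ y, P y = 1)
    (hQW : ∑ y, Q y * W y ≤ 1) :
    ∑ y, P y * log (W y) ≤ ∑ y, P y * log (P y / Q y) := by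
  have key : ∀ y, P y * log (W y) ≤ P y * log (P y / Q y) + (Q y * W y - P y) := by
    intro y
    have hlog := log_le_sub_one_of_pos (div_pos (mul_pos (hQ y) (hW y)) (hP y))
    rw [log_div (mul_pos (hQ y) (hW y)).ne' (hP y).ne', log_mul (hQ y).ne' (hW y).ne'] at hlog
    rw [log_div (hP y).ne' (hQ y).ne']
    have hPQW : P y * (Q y * W y / P y - 1) = Q y * W y - P y := by
      rw [mul_sub, mul_one, mul_div_cancel₀ _ (hP y).ne']
    have := mul_le_mul_of_nonneg_left hlog (hP y).le
    rw [hPQW] at this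
    linarith
  calc ∑ y, P y * log (W y) ≤ ∑ y, (P y * log (P y / Q y) + (Q y * W y - P y)) :=
        Finset.sum_le_sum fun y _ => key y
    _ = ∑ y, P y * log (P y / Q y) + (∑ y, Q y * W y - ∑ y, P y) := by
        rw [Finset.sum_add_distrib, Finset.sum_sub_distrib]
    _ ≤ ∑ y, P y * log (P y / Q y) := by linarith

section Gambling

variable {R Rbar : ℝ}

theorem Qb_pos (hR : 0 < R) (hRbar : 0 < Rbar) (b : Bool) : 0 < Qb R Rbar b := by
  cases b <;> simp only [Qb] <;> positivity

theorem sum_Qb_mul_one_add_mul_val (hRRbar : R + Rbar ≠ 0) (c : ℝ) :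
    ∑ b, Qb R Rbar b * (1 + c * val R Rbar b) = 1 := by
  simp only [Fintype.sum_bool, Qb, val, if_true, Bool.false_eq_true, if_false]
  field_simp
  ring

theorem sum_prod_Qb_mul_capital_eq_one (hRRbar : R + Rbar ≠ 0) {n : ℕ}
    (f : Fin n → (Fin n → Bool) → ℝ)
    (hcausal : ∀ (i : Fin n) (y y' : Fin n → Bool), (∀ j, j < i → y j = y' j) → f i y = f i y') :
    ∑ y, ∏ i, Qb R Rbar (y i) * (1 + f i y * val R Rbar (y i)) = 1 := by
  refine sum_prod_eq_one_of_causal _ (fun i y y' hy => ?_) fun i y => ?_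
  · rw [hy i le_rfl, hcausal i y y' fun j hj => hy j hj.le]
  · have hf : ∀ b, f i (Function.update y i b) = f i y := fun b =>
      hcausal i _ y fun j hj => Function.update_of_ne hj.ne _ _
    simp only [Function.update_self, hf]
    exact sum_Qb_mul_one_add_mul_val hRRbar _

end Gambling

theorem stmt11_general (n : ℕ) (R Rbar : ℝ) (hR : 0 < R) (hRbar : 0 < Rbar)
    (P : (Fin n → Bool) → ℝ) (hP : ∀ y, 0 < P y) (hPsum : ∑ y, P y = 1)
    (f : Fin n → (Fin n → Bool) → ℝ)
    (hcausal : ∀ (i : Fin n) (y y' : Fin n → Bool),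
      (∀ j, j < i → y j = y' j) → f i y = f i y')
    (hf : ∀ i y, 0 < 1 + f i y * val R Rbar (y i)) :
    ∑ y, P y * ((1 / (n : ℝ)) * ∑ i, Real.log (1 + f i y * val R Rbar (y i)))
      ≤ (1 / (n : ℝ)) * ∑ y, P y * Real.log (P y / ∏ i, Qb R Rbar (y i)) := by
  have hlog_capital : ∀ y, ∑ i, log (1 + f i y * val R Rbar (y i))
      = log (∏ i, (1 + f i y * val R Rbar (y i))) := fun y =>
    (log_prod fun i _ => (hf i y).ne').symm
  simp only [hlog_capital, mul_left_comm _ (1 / (n : ℝ)), ← Finset.mul_sum]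
  refine mul_le_mul_of_nonneg_left ?_ (by positivity)
  refine sum_mul_log_le_sum_mul_log_div P _ _ hP
    (fun y => Finset.prod_pos fun i _ => Qb_pos hR hRbar (y i))
    (fun y => Finset.prod_pos fun i _ => hf i y) hPsum (le_of_eq ?_)
  simp only [← Finset.prod_mul_distrib]
  exact sum_prod_Qb_mul_capital_eq_one (by linarith) f hcausal

/-- In binary gambling with memory effects, the average capital growth rate is
bounded by `(1/n)·D_KL(P(y^n)‖Q(y^n))` with `Q(y^n) = Π_i Q(y_i)`. -/
theorem stmt11 (n : ℕ) (hn : 0 < n) (R Rbar : ℝ) (hR : 0 < R) (hRbar : 0 < Rbar)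
    (P : (Fin n → Bool) → ℝ) (hP : ∀ y, 0 < P y) (hPsum : ∑ y, P y = 1)
    (f : Fin n → (Fin n → Bool) → ℝ)
    (hcausal : ∀ (i : Fin n) (y y' : Fin n → Bool),
      (∀ j, j < i → y j = y' j) → f i y = f i y')
    (hf : ∀ i y, 0 < 1 + f i y * val R Rbar (y i)) :
    ∑ y, P y * ((1 / (n : ℝ)) * ∑ i, Real.log (1 + f i y * val R Rbar (y i)))
      ≤ (1 / (n : ℝ)) * ∑ y, P y * Real.log (P y / ∏ i, Qb R Rbar (y i)) :=
  stmt11_general n R Rbar hR hRbar P hP hPsum f hcausal hf
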